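/- arXiv:2109.10264 — 2 statements merged into one kernel-verified Lean document; each statement's English description precedes it below -/
import Mathlib

section
/- Let f be a holomorphic function on the open unit disk 𝔻 ⊆ ℂ with |f(z)| < 1 for all z ∈ 𝔻. Then the modulus of f is distance decreasing with respect to the hyperbolic distance: σ(|f(z)|, |f(w)|) ≤ σ(z, w) for all z, w ∈ 𝔻, where |f(z)| and |f(w)| are regarded as points of the unit disk on the nonnegative real axis. -/
/-- The pseudo-hyperbolic distance on the unit disk. -/
noncomputable def pseudoHypDist (z w : ℂ) : ℝ :=
  ‖z - w‖ / ‖1 - (starRingEnd ℂ) z * w‖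

/-- The hyperbolic distance on the unit disk (curvature −1, density 2/(1−|z|²)). -/
noncomputable def hypDist (z w : ℂ) : ℝ :=
  Real.log ((1 + pseudoHypDist z w) / (1 - pseudoHypDist z w))

/-!
By Schwarz–Pick, `ρ(f z, f w) ≤ ρ(z, w)`. Passing to moduli can only decrease `ρ` further:
`1 - ρ(a, b)² = (1 - |a|²)(1 - |b|²) / |1 - ā b|²`, whose numerator depends only on `|a|, |b|`,
while `|1 - ā b| ≥ 1 - |a||b|` with equality for `a, b ≥ 0`. Finally `σ` is an increasing
function of `ρ`.
-/

open Complex ComplexConjugate Metric Set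

lemma norm_one_sub_conj_mul_sq (a b : ℂ) :
    ‖1 - conj a * b‖ ^ 2 = ‖a - b‖ ^ 2 + (1 - ‖a‖ ^ 2) * (1 - ‖b‖ ^ 2) := by
  simp only [Complex.sq_norm, normSq_apply, sub_re, sub_im, mul_re, mul_im, one_re, one_im,
    conj_re, conj_im]
  ring

lemma one_sub_norm_mul_norm_le (a b : ℂ) : 1 - ‖a‖ * ‖b‖ ≤ ‖1 - conj a * b‖ := by
  simpa using norm_sub_norm_le (1 : ℂ) (conj a * b)

lemma one_sub_conj_mul_ne_zero {a b : ℂ} (ha : ‖a‖ < 1) (hb : ‖b‖ ≤ 1) :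
    1 - conj a * b ≠ 0 := by
  have : 0 < 1 - ‖a‖ * ‖b‖ := by nlinarith [norm_nonneg a]
  exact norm_pos_iff.1 (this.trans_le (one_sub_norm_mul_norm_le a b))

lemma pseudoHypDist_nonneg (z w : ℂ) : 0 ≤ pseudoHypDist z w := by
  unfold pseudoHypDist; positivity

lemma one_sub_pseudoHypDist_sq {z w : ℂ} (h : 1 - conj z * w ≠ 0) :
    1 - pseudoHypDist z w ^ 2 = (1 - ‖z‖ ^ 2) * (1 - ‖w‖ ^ 2) / ‖1 - conj z * w‖ ^ 2 := by
  have hD : ‖1 - conj z * w‖ ^ 2 ≠ 0 := by positivity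
  rw [pseudoHypDist, div_pow, eq_div_iff hD, sub_mul, div_mul_cancel₀ _ hD,
    norm_one_sub_conj_mul_sq]
  ring

lemma pseudoHypDist_lt_one {z w : ℂ} (hz : ‖z‖ < 1) (hw : ‖w‖ < 1) :
    pseudoHypDist z w < 1 := by
  have hD := one_sub_conj_mul_ne_zero hz hw.le
  have : 0 < 1 - pseudoHypDist z w ^ 2 := by
    rw [one_sub_pseudoHypDist_sq hD]
    exact div_pos (mul_pos (sub_pos.2 (pow_lt_one₀ (norm_nonneg z) hz two_ne_zero))
      (sub_pos.2 (pow_lt_one₀ (norm_nonneg w) hw two_ne_zero))) (by positivity)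
  nlinarith [pseudoHypDist_nonneg z w]

lemma pseudoHypDist_ofReal_norm_le {z w : ℂ} (hz : ‖z‖ < 1) (hw : ‖w‖ < 1) :
    pseudoHypDist ‖z‖ ‖w‖ ≤ pseudoHypDist z w := by
  have hnorm (u : ℂ) : ‖(‖u‖ : ℂ)‖ = ‖u‖ := by simp
  have hD' : 1 - conj (‖z‖ : ℂ) * ‖w‖ ≠ 0 :=
    one_sub_conj_mul_ne_zero (by rwa [hnorm]) (by rw [hnorm]; exact hw.le)
  have hD'_eq : ‖1 - conj (‖z‖ : ℂ) * ‖w‖‖ = 1 - ‖z‖ * ‖w‖ := by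
    rw [conj_ofReal, ← ofReal_mul, ← ofReal_one, ← ofReal_sub, norm_real, Real.norm_of_nonneg]
    nlinarith [norm_nonneg z, norm_nonneg w]
  have hC : 0 ≤ (1 - ‖z‖ ^ 2) * (1 - ‖w‖ ^ 2) :=
    mul_nonneg (sub_nonneg.2 (pow_le_one₀ (norm_nonneg z) hz.le))
      (sub_nonneg.2 (pow_le_one₀ (norm_nonneg w) hw.le))
  have hsq : 1 - pseudoHypDist z w ^ 2 ≤ 1 - pseudoHypDist ‖z‖ ‖w‖ ^ 2 := by
    rw [one_sub_pseudoHypDist_sq (one_sub_conj_mul_ne_zero hz hw.le),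
      one_sub_pseudoHypDist_sq hD', hnorm, hnorm]
    refine div_le_div_of_nonneg_left hC (by positivity) (pow_le_pow_left₀ (norm_nonneg _) ?_ 2)
    rw [hD'_eq]
    exact one_sub_norm_mul_norm_le z w
  exact (pow_le_pow_iff_left₀ (pseudoHypDist_nonneg _ _) (pseudoHypDist_nonneg _ _)
    two_ne_zero).1 (by linarith)

lemma hypDist_le_of_pseudoHypDist_le {a b c d : ℂ} (h : pseudoHypDist a b ≤ pseudoHypDist c d)
    (hcd : pseudoHypDist c d < 1) : hypDist a b ≤ hypDist c d := by
  have hab := pseudoHypDist_nonneg a b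
  apply Real.log_le_log (by apply div_pos <;> linarith)
  rw [div_le_div_iff₀ (by linarith) (by linarith)]
  nlinarith

noncomputable def diskMobius (a z : ℂ) : ℂ := (a - z) / (1 - conj a * z)

lemma norm_diskMobius (a z : ℂ) : ‖diskMobius a z‖ = pseudoHypDist a z := norm_div _ _

@[simp] lemma diskMobius_self (a : ℂ) : diskMobius a a = 0 := by simp [diskMobius]

@[simp] lemma diskMobius_zero (a : ℂ) : diskMobius a 0 = a := by simp [diskMobius]

lemma diskMobius_diskMobius {a z : ℂ} (ha : ‖a‖ < 1) (hz : ‖z‖ < 1) :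
    diskMobius a (diskMobius a z) = z := by
  have hz' := one_sub_conj_mul_ne_zero ha hz.le
  have ha' := one_sub_conj_mul_ne_zero ha ha.le
  have hnum : a - diskMobius a z = z * (1 - conj a * a) / (1 - conj a * z) := by
    rw [diskMobius, eq_div_iff hz', sub_mul, div_mul_cancel₀ _ hz']
    ring
  have hden : 1 - conj a * diskMobius a z = (1 - conj a * a) / (1 - conj a * z) := by
    rw [diskMobius, eq_div_iff hz', sub_mul, mul_assoc, div_mul_cancel₀ _ hz']
    ring
  rw [diskMobius, hnum, hden, div_div_div_cancel_right₀ hz', mul_div_cancel_right₀ _ ha']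

lemma mapsTo_diskMobius {a : ℂ} (ha : ‖a‖ < 1) :
    MapsTo (diskMobius a) (ball 0 1) (ball 0 1) := fun z hz => by
  rw [mem_ball_zero_iff] at hz ⊢
  rw [norm_diskMobius]
  exact pseudoHypDist_lt_one ha hz

lemma differentiableOn_diskMobius {a : ℂ} (ha : ‖a‖ < 1) :
    DifferentiableOn ℂ (diskMobius a) (ball 0 1) := fun _ hz =>
  ((differentiableAt_const a).sub differentiableAt_id).div
    ((differentiableAt_const 1).sub ((differentiableAt_const _).mul differentiableAt_id))
    (one_sub_conj_mul_ne_zero ha (mem_ball_zero_iff.1 hz).le) |>.differentiableWithinAt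

/-- Schwarz–Pick: conjugating `f` by the involutions `diskMobius z` and `diskMobius (f z)`
yields a self-map of the disk fixing `0`, to which the Schwarz lemma applies. -/
theorem pseudoHypDist_le_of_mapsTo_ball {f : ℂ → ℂ} (hd : DifferentiableOn ℂ f (ball 0 1))
    (hf : MapsTo f (ball 0 1) (ball 0 1)) {z w : ℂ} (hz : z ∈ ball (0 : ℂ) 1)
    (hw : w ∈ ball (0 : ℂ) 1) : pseudoHypDist (f z) (f w) ≤ pseudoHypDist z w := by
  have hz1 := mem_ball_zero_iff.1 hz
  have hfz := mem_ball_zero_iff.1 (hf hz)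
  set g := diskMobius (f z) ∘ f ∘ diskMobius z
  have hgd : DifferentiableOn ℂ g (ball 0 1) :=
    (differentiableOn_diskMobius hfz).comp
      (hd.comp (differentiableOn_diskMobius hz1) (mapsTo_diskMobius hz1))
      (hf.comp (mapsTo_diskMobius hz1))
  have hg : MapsTo g (ball 0 1) (ball 0 1) :=
    (mapsTo_diskMobius hfz).comp (hf.comp (mapsTo_diskMobius hz1))
  have h := norm_le_norm_of_mapsTo_ball hgd (hg.mono_right ball_subset_closedBall)
    (by simp [g]) (mem_ball_zero_iff.1 (mapsTo_diskMobius hz1 hw))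
  simpa [g, diskMobius_diskMobius hz1 (mem_ball_zero_iff.1 hw), norm_diskMobius] using h

/-- If f is holomorphic on the unit disk with |f| < 1, then
σ(|f(z)|, |f(w)|) ≤ σ(z, w) for z, w in the disk. -/
theorem hypDist_abs_holomorphic_le (f : ℂ → ℂ)
    (hf : ∀ z ∈ Metric.ball (0 : ℂ) 1, DifferentiableAt ℂ f z)
    (hb : ∀ z ∈ Metric.ball (0 : ℂ) 1, ‖f z‖ < 1)
    (z w : ℂ) (hz : z ∈ Metric.ball (0 : ℂ) 1) (hw : w ∈ Metric.ball (0 : ℂ) 1) :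
    hypDist (‖f z‖ : ℂ) (‖f w‖ : ℂ) ≤ hypDist z w := by
  have hd : DifferentiableOn ℂ f (ball 0 1) := fun u hu => (hf u hu).differentiableWithinAt
  have hmaps : MapsTo f (ball 0 1) (ball 0 1) := fun u hu => mem_ball_zero_iff.2 (hb u hu)
  refine hypDist_le_of_pseudoHypDist_le ?_ (pseudoHypDist_lt_one (mem_ball_zero_iff.1 hz)
    (mem_ball_zero_iff.1 hw))
  calc pseudoHypDist ‖f z‖ ‖f w‖
      ≤ pseudoHypDist (f z) (f w) := pseudoHypDist_ofReal_norm_le (hb z hz) (hb w hw)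
    _ ≤ pseudoHypDist z w := pseudoHypDist_le_of_mapsTo_ball hd hmaps hz hw
end

section
/- Let k > 0, C₁ > 0 and C₂ be real constants, and let J ⊆ ℝ be an open interval on which sin(C₁·t + C₂) ≠ 0. Then the positive function ω(t) = C₁ / (k·|sin(C₁·t + C₂)|) on J satisfies (ω'(t)² − ω(t)·ω''(t)) / ω(t)⁴ = −k² for all t ∈ J. -/
/-!
Near a point where `sin (C₁ t + C₂) ≠ 0` the absolute value is `ε sin (C₁ t + C₂)` for a fixed sign
`ε`, so locally `ω = 1 / u` with `u = ε (k / C₁) sin (C₁ t + C₂)`. For a weight `1 / u` the curvature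
quantity is `u u'' - u'²`, which for `u = a sin (b t + c)` equals `-a² b² (sin² + cos²) = -(a b)²`,
here `-k²`.
-/

open Real Filter Topology

noncomputable def weightCurvature (ω : ℝ → ℝ) (t : ℝ) : ℝ :=
  (deriv ω t ^ 2 - ω t * deriv (deriv ω) t) / ω t ^ 4

theorem weightCurvature_congr {ω₁ ω₂ : ℝ → ℝ} {t : ℝ} (h : ω₁ =ᶠ[𝓝 t] ω₂) :
    weightCurvature ω₁ t = weightCurvature ω₂ t := by
  rw [weightCurvature, weightCurvature, h.deriv_eq, h.deriv.deriv_eq, h.eq_of_nhds]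

theorem weightCurvature_inv {u u' : ℝ → ℝ} {u'' t : ℝ}
    (hu : ∀ᶠ x in 𝓝 t, HasDerivAt u (u' x) x) (hu' : HasDerivAt u' u'' t) (ht : u t ≠ 0) :
    weightCurvature (fun x => (u x)⁻¹) t = u t * u'' - u' t ^ 2 := by
  have hne : ∀ᶠ x in 𝓝 t, u x ≠ 0 := hu.self_of_nhds.continuousAt.eventually_ne ht
  have hd : deriv (fun x => (u x)⁻¹) =ᶠ[𝓝 t] fun x => -u' x / u x ^ 2 := by
    filter_upwards [hu, hne] with x hx hx0
    exact (hx.inv hx0).deriv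
  have hd2 : deriv (deriv fun x => (u x)⁻¹) t = (2 * u' t ^ 2 - u t * u'') / u t ^ 3 := by
    rw [hd.deriv_eq, (hu'.fun_neg.fun_div (hu.self_of_nhds.fun_pow 2) (pow_ne_zero 2 ht)).deriv]
    field_simp
    ring
  rw [weightCurvature, hd.eq_of_nhds, hd2]
  field_simp
  ring

theorem weightCurvature_inv_mul_sin {a b c t : ℝ} (ha : a ≠ 0) (ht : sin (b * t + c) ≠ 0) :
    weightCurvature (fun x => (a * sin (b * x + c))⁻¹) t = -(a * b) ^ 2 := by
  have hlin : ∀ x, HasDerivAt (fun x => b * x + c) b x := fun x => by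
    simpa using ((hasDerivAt_id x).const_mul b).add_const c
  have hu : ∀ x, HasDerivAt (fun x => a * sin (b * x + c)) (a * b * cos (b * x + c)) x :=
    fun x => (((hasDerivAt_sin _).comp x (hlin x)).const_mul a).congr_deriv (by ring)
  have hu' : HasDerivAt (fun x => a * b * cos (b * x + c)) (-(a * b * b) * sin (b * t + c)) t :=
    (((hasDerivAt_cos _).comp t (hlin t)).const_mul (a * b)).congr_deriv (by ring)
  rw [weightCurvature_inv (Eventually.of_forall hu) hu' (mul_ne_zero ha ht)]
  linear_combination (-(a * b) ^ 2) * sin_sq_add_cos_sq (b * t + c)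

theorem ContinuousAt.exists_abs_eventuallyEq_mul {f : ℝ → ℝ} {t : ℝ} (hf : ContinuousAt f t)
    (ht : f t ≠ 0) :
    ∃ ε : ℝ, ε ^ 2 = 1 ∧ (fun x => |f x|) =ᶠ[𝓝 t] fun x => ε * f x := by
  rcases ht.lt_or_gt with hneg | hpos
  · refine ⟨-1, by norm_num, ?_⟩
    filter_upwards [hf.eventually_lt continuousAt_const hneg] with x hx
    rw [abs_of_neg hx, neg_one_mul]
  · refine ⟨1, by norm_num, ?_⟩
    filter_upwards [continuousAt_const.eventually_lt hf hpos] with x hx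
    rw [abs_of_pos hx, one_mul]

theorem weight_sin_curvature_general (k C₁ C₂ : ℝ) (hk : 0 < k) (hC₁ : 0 < C₁)
    (J : Set ℝ)
    (hsin : ∀ t ∈ J, Real.sin (C₁ * t + C₂) ≠ 0)
    (ω : ℝ → ℝ) (hω : ∀ t, ω t = C₁ / (k * |Real.sin (C₁ * t + C₂)|)) :
    ∀ t ∈ J, (deriv ω t ^ 2 - ω t * deriv (deriv ω) t) / ω t ^ 4 = -k ^ 2 := by
  intro t ht
  have hcont : ContinuousAt (fun x => sin (C₁ * x + C₂)) t := by fun_prop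
  obtain ⟨ε, hε, habs⟩ := hcont.exists_abs_eventuallyEq_mul (hsin t ht)
  have hωinv : ω =ᶠ[𝓝 t] fun x => (ε * (k / C₁) * sin (C₁ * x + C₂))⁻¹ := by
    filter_upwards [habs] with x hx
    rw [hω, hx]
    field_simp
  have hε0 : ε ≠ 0 := by rintro rfl; norm_num at hε
  change weightCurvature ω t = _
  rw [weightCurvature_congr hωinv,
    weightCurvature_inv_mul_sin (by positivity) (hsin t ht)]
  field_simp
  rw [hε]

/-- For k > 0, C₁ > 0, C₂ and an open interval J on which
sin(C₁t + C₂) ≠ 0, the weight ω(t) = C₁/(k·|sin(C₁t + C₂)|) satisfies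
(ω'² − ω·ω'')/ω⁴ = −k² on J. -/
theorem weight_sin_curvature (k C₁ C₂ : ℝ) (hk : 0 < k) (hC₁ : 0 < C₁)
    (J : Set ℝ) (hJopen : IsOpen J) (hJconn : J.OrdConnected)
    (hsin : ∀ t ∈ J, Real.sin (C₁ * t + C₂) ≠ 0)
    (ω : ℝ → ℝ) (hω : ∀ t, ω t = C₁ / (k * |Real.sin (C₁ * t + C₂)|)) :
    ∀ t ∈ J, (deriv ω t ^ 2 - ω t * deriv (deriv ω) t) / ω t ^ 4 = -k ^ 2 :=
  weight_sin_curvature_general k C₁ C₂ hk hC₁ J hsin ω hω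
end
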